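/- Let H be a complex Hilbert space, A a positive bounded operator, and T an operator admitting an A-adjoint T^♯ (i.e. ⟨Tx,y⟩_A = ⟨x,T^♯y⟩_A for all x,y). For α ∈ [0,1] and β ≥ 0, set γ₁ = ((2β+1)(1+α²)+2α)/(1+β) and γ₂ = ((1−α)(2+(1+α)(1+2β)))/(1+β). Then w_A(T)⁴ ≤ (γ₁/16) ‖T^♯T + TT^♯‖_A² + (γ₂/8) ‖T^♯T + TT^♯‖_A · w_A(T²), where w_A(S) = sup{ |⟨Sx,x⟩_A| : ‖x‖_A = 1 } and ‖S‖_A = sup{ ‖Sx‖_A : ‖x‖_A = 1 }. -/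

import Mathlib

open scoped InnerProductSpace

variable {H : Type*} [NormedAddCommGroup H] [InnerProductSpace ℂ H] [CompleteSpace H]

/-- The `A`-semi-inner product `⟪x, y⟫_A = ⟪A x, y⟫`. -/
noncomputable def ipA (A : H →L[ℂ] H) (x y : H) : ℂ := ⟪A x, y⟫_ℂ

/-- The `A`-semi-norm `‖x‖_A = √(re ⟪A x, x⟫)`. -/
noncomputable def nA (A : H →L[ℂ] H) (x : H) : ℝ := Real.sqrt (ipA A x x).re

/-- The `A`-numerical radius. -/
noncomputable def wA (A T : H →L[ℂ] H) : ℝ :=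
  sSup {c : ℝ | ∃ x : H, nA A x = 1 ∧ c = ‖ipA A (T x) x‖}

/-- The `A`-operator seminorm. -/
noncomputable def opA (A T : H →L[ℂ] H) : ℝ :=
  sSup {c : ℝ | ∃ x : H, nA A x = 1 ∧ c = nA A (T x)}

/-!
Fix `x` with `‖x‖_A = 1` and put `d = |⟨Tx, x⟩_A|²`, `P = ‖T^♯T + TT^♯‖_A / 2`, `Q = w_A(T²)`.
Cauchy–Schwarz gives `d ≤ ‖Tx‖_A ‖T^♯x‖_A ≤ (‖Tx‖_A² + ‖T^♯x‖_A²) / 2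
= Re ⟨(T^♯T + TT^♯)x, x⟩_A / 2 ≤ P`, and Buzano's inequality for `Tx`, `T^♯x` and the unit
vector `x` gives `2d ≤ ‖Tx‖_A ‖T^♯x‖_A + |⟨T²x, x⟩_A| ≤ P + Q`. These two constraints force
`d² ≤ γ₁/4 · P² + γ₂/4 · PQ` whenever `γ₁ ≥ 1`, `γ₂ ≥ 0` and `γ₁ + γ₂ = 4`.

`A^{1/2}` turns `⟨·,·⟩_A` into an honest inner product. The suprema defining `‖S‖_A` and
`w_A(S)` are `0` for unbounded sets, so one also needs that `T` and `T^♯` are `A`-bounded (by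
`2 w_A(T)`, via polarization) as soon as the set defining `w_A(T)` is bounded.
-/

section Buzano

variable {𝕜 E : Type*} [RCLike 𝕜] [NormedAddCommGroup E] [InnerProductSpace 𝕜 E]

theorem norm_inner_mul_inner_le_of_norm_eq_one {e : E} (he : ‖e‖ = 1) (a b : E) :
    ‖⟪a, e⟫_𝕜 * ⟪e, b⟫_𝕜‖ ≤ (‖a‖ * ‖b‖ + ‖⟪a, b⟫_𝕜‖) / 2 := by
  -- `r` is the reflection of `a` in the line through `e`
  set r : E := (2 * ⟪e, a⟫_𝕜) • e - a
  have hr : ‖r‖ = ‖a‖ := by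
    refine sq_eq_sq₀ (norm_nonneg _) (norm_nonneg _) |>.mp ?_
    rw [@norm_sub_sq 𝕜, inner_smul_left, norm_smul, he, (starRingEnd 𝕜).map_mul, map_ofNat,
      mul_assoc, RCLike.conj_mul, norm_mul, RCLike.norm_ofNat]
    norm_cast
    ring
  have hrb : ⟪r, b⟫_𝕜 = 2 * (⟪a, e⟫_𝕜 * ⟪e, b⟫_𝕜) - ⟪a, b⟫_𝕜 := by
    simp only [r, inner_sub_left, inner_smul_left, map_mul, map_ofNat, inner_conj_symm]
    ring
  have h : 2 * ‖⟪a, e⟫_𝕜 * ⟪e, b⟫_𝕜‖ ≤ ‖a‖ * ‖b‖ + ‖⟪a, b⟫_𝕜‖ :=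
    calc 2 * ‖⟪a, e⟫_𝕜 * ⟪e, b⟫_𝕜‖ = ‖⟪r, b⟫_𝕜 + ⟪a, b⟫_𝕜‖ := by
          rw [hrb, sub_add_cancel, norm_mul (2 : 𝕜), RCLike.norm_ofNat]
      _ ≤ ‖r‖ * ‖b‖ + ‖⟪a, b⟫_𝕜‖ := (norm_add_le _ _).trans (by gcongr; exact norm_inner_le_norm _ _)
      _ = ‖a‖ * ‖b‖ + ‖⟪a, b⟫_𝕜‖ := by rw [hr]
  linarith

end Buzano

theorem sq_le_of_le_of_two_mul_le_add {d P Q g₁ g₂ : ℝ} (hd : 0 ≤ d) (hP : 0 ≤ P) (hQ : 0 ≤ Q)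
    (hdP : d ≤ P) (hdPQ : 2 * d ≤ P + Q) (hg₁ : 1 ≤ g₁) (hg₂ : 0 ≤ g₂) (hg : g₁ + g₂ = 4) :
    d ^ 2 ≤ g₁ / 4 * P ^ 2 + g₂ / 4 * (P * Q) := by
  rcases le_total Q P with h | h
  · nlinarith [mul_nonneg (sub_nonneg.2 hg₁) (mul_nonneg hP (sub_nonneg.2 h)),
      mul_nonneg hP hQ, sq_nonneg (P + Q - 2 * d), mul_nonneg hQ (sub_nonneg.2 h)]
  · nlinarith [mul_nonneg hg₂ (mul_nonneg hP (sub_nonneg.2 h)), mul_nonneg hd (sub_nonneg.2 hdP)]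

noncomputable def γ₁ (α β : ℝ) : ℝ := ((2 * β + 1) * (1 + α ^ 2) + 2 * α) / (1 + β)

noncomputable def γ₂ (α β : ℝ) : ℝ := ((1 - α) * (2 + (1 + α) * (1 + 2 * β))) / (1 + β)

section Coefficients

variable {α β : ℝ}

theorem one_le_γ₁ (hα : 0 ≤ α) (hβ : 0 ≤ β) : 1 ≤ γ₁ α β := by
  rw [γ₁, le_div_iff₀ (by linarith)]
  nlinarith [sq_nonneg α, mul_nonneg hβ (sq_nonneg α)]

theorem γ₂_nonneg (hα₀ : 0 ≤ α) (hα₁ : α ≤ 1) (hβ : 0 ≤ β) : 0 ≤ γ₂ α β := by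
  unfold γ₂
  have : 0 ≤ 1 - α := by linarith
  positivity

theorem γ₁_add_γ₂ (hβ : 0 ≤ β) : γ₁ α β + γ₂ α β = 4 := by
  rw [γ₁, γ₂, ← add_div, div_eq_iff (by linarith)]
  ring

end Coefficients

section SemiInnerProduct

variable {E : Type*} [NormedAddCommGroup E] [InnerProductSpace ℂ E] {A : E →L[ℂ] E}

theorem nA_nonneg (A : E →L[ℂ] E) (x : E) : 0 ≤ nA A x := Real.sqrt_nonneg _

theorem norm_ipA_smul_smul (c : ℂ) (x y : E) :
    ‖ipA A (c • x) (c • y)‖ = ‖c‖ ^ 2 * ‖ipA A x y‖ := by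
  simp only [ipA, map_smul, inner_smul_left, inner_smul_right, norm_mul, RCLike.norm_conj]
  ring

theorem ipA_smul_right (c : ℂ) (x y : E) : ipA A x (c • y) = c * ipA A x y :=
  inner_smul_right _ _ _

theorem wA_nonneg (A T : E →L[ℂ] E) : 0 ≤ wA A T :=
  Real.sSup_nonneg (by rintro _ ⟨x, -, rfl⟩; exact norm_nonneg _)

theorem opA_nonneg (A T : E →L[ℂ] E) : 0 ≤ opA A T :=
  Real.sSup_nonneg (by rintro _ ⟨x, -, rfl⟩; exact nA_nonneg A _)

theorem wA_pow_le {T : E →L[ℂ] E} {n : ℕ} (hn : n ≠ 0) {K : ℝ} (hK : 0 ≤ K)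
    (h : ∀ x, nA A x = 1 → ‖ipA A (T x) x‖ ^ n ≤ K) : wA A T ^ n ≤ K := by
  have hw : wA A T ≤ K ^ (n⁻¹ : ℝ) := by
    refine Real.sSup_le ?_ (by positivity)
    rintro _ ⟨x, hx, rfl⟩
    rw [← pow_le_pow_iff_left₀ (norm_nonneg _) (by positivity) hn,
      Real.rpow_inv_natCast_pow hK hn]
    exact h x hx
  calc wA A T ^ n ≤ (K ^ (n⁻¹ : ℝ)) ^ n := pow_le_pow_left₀ (wA_nonneg A T) hw n
    _ = K := Real.rpow_inv_natCast_pow hK hn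

theorem nA_apply_le_opA {S : E →L[ℂ] E} {C : ℝ} (hS : ∀ x, nA A (S x) ≤ C * nA A x) {x : E}
    (hx : nA A x = 1) : nA A (S x) ≤ opA A S :=
  le_csSup ⟨C, by rintro _ ⟨y, hy, rfl⟩; simpa [hy] using hS y⟩ ⟨x, hx, rfl⟩

theorem nA_comp_apply_le {S T : E →L[ℂ] E} {C D : ℝ} (hS : ∀ x, nA A (S x) ≤ C * nA A x)
    (hT : ∀ x, nA A (T x) ≤ D * nA A x) (hC : 0 ≤ C) (x : E) :
    nA A ((S ∘L T) x) ≤ C * D * nA A x :=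
  calc nA A (S (T x)) ≤ C * nA A (T x) := hS (T x)
    _ ≤ C * (D * nA A x) := mul_le_mul_of_nonneg_left (hT x) hC
    _ = C * D * nA A x := (mul_assoc _ _ _).symm

end SemiInnerProduct

section PositiveOperator

variable {A : H →L[ℂ] H}

theorem ipA_eq_inner_sqrt (hA : A.IsPositive) (x y : H) :
    ipA A x y = ⟪CFC.sqrt A x, CFC.sqrt A y⟫_ℂ := by
  have hA' : 0 ≤ A := (A.nonneg_iff_isPositive).mpr hA
  calc ipA A x y = ⟪(CFC.sqrt A * CFC.sqrt A) x, y⟫_ℂ := by rw [CFC.sqrt_mul_sqrt_self A hA', ipA]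
    _ = _ := (CFC.sqrt_nonneg A).isSelfAdjoint.isSymmetric _ _

theorem nA_eq_norm_sqrt (hA : A.IsPositive) (x : H) : nA A x = ‖CFC.sqrt A x‖ := by
  rw [nA, ipA_eq_inner_sqrt hA, ← RCLike.re_eq_complex_re, inner_self_eq_norm_sq,
    Real.sqrt_sq (norm_nonneg _)]

theorem norm_ipA_le (hA : A.IsPositive) (x y : H) : ‖ipA A x y‖ ≤ nA A x * nA A y := by
  rw [ipA_eq_inner_sqrt hA, nA_eq_norm_sqrt hA, nA_eq_norm_sqrt hA]
  exact norm_inner_le_norm _ _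

theorem norm_ipA_self (hA : A.IsPositive) (x : H) : ‖ipA A x x‖ = nA A x ^ 2 := by
  rw [ipA_eq_inner_sqrt hA, nA_eq_norm_sqrt hA, inner_self_eq_norm_sq_to_K]
  norm_cast
  simp

theorem re_ipA_self (hA : A.IsPositive) (x : H) : (ipA A x x).re = nA A x ^ 2 := by
  rw [ipA_eq_inner_sqrt hA, nA_eq_norm_sqrt hA, ← RCLike.re_eq_complex_re, inner_self_eq_norm_sq]

theorem ipA_conj_symm (hA : A.IsPositive) (x y : H) : starRingEnd ℂ (ipA A x y) = ipA A y x := by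
  simp only [ipA_eq_inner_sqrt hA, inner_conj_symm]

theorem nA_smul (hA : A.IsPositive) (c : ℂ) (x : H) : nA A (c • x) = ‖c‖ * nA A x := by
  rw [nA_eq_norm_sqrt hA, nA_eq_norm_sqrt hA, map_smul, norm_smul]

theorem nA_add_le (hA : A.IsPositive) (x y : H) : nA A (x + y) ≤ nA A x + nA A y := by
  simp only [nA_eq_norm_sqrt hA, map_add, norm_add_le]

theorem nA_add_sq_add_nA_sub_sq (hA : A.IsPositive) (x y : H) :
    nA A (x + y) ^ 2 + nA A (x - y) ^ 2 = 2 * (nA A x ^ 2 + nA A y ^ 2) := by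
  simp only [nA_eq_norm_sqrt hA, map_add, map_sub]
  exact parallelogram_law_with_norm ℂ (CFC.sqrt A x) (CFC.sqrt A y)

theorem norm_ipA_mul_ipA_le (hA : A.IsPositive) {e : H} (he : nA A e = 1) (x y : H) :
    ‖ipA A x e * ipA A e y‖ ≤ (nA A x * nA A y + ‖ipA A x y‖) / 2 := by
  simp only [ipA_eq_inner_sqrt hA, nA_eq_norm_sqrt hA] at he ⊢
  exact norm_inner_mul_inner_le_of_norm_eq_one he _ _

theorem norm_ipA_apply_self_le_wA (hA : A.IsPositive) {T : H →L[ℂ] H}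
    (hT : BddAbove {c : ℝ | ∃ x : H, nA A x = 1 ∧ c = ‖ipA A (T x) x‖}) (y : H) :
    ‖ipA A (T y) y‖ ≤ wA A T * nA A y ^ 2 := by
  rcases eq_or_ne (nA A y) 0 with hy | hy
  · simpa [hy] using norm_ipA_le hA (T y) y
  set u : H := ((nA A y)⁻¹ : ℂ) • y
  have hu : nA A u = 1 := by
    rw [nA_smul hA, norm_inv, Complex.norm_real, Real.norm_of_nonneg (nA_nonneg A y),
      inv_mul_cancel₀ hy]
  have hle : ‖ipA A (T u) u‖ ≤ wA A T := le_csSup hT ⟨u, hu, rfl⟩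
  rw [map_smul, norm_ipA_smul_smul, norm_inv, Complex.norm_real,
    Real.norm_of_nonneg (nA_nonneg A y), inv_pow, inv_mul_le_iff₀ (by positivity)] at hle
  linarith

theorem norm_ipA_apply_self_le_wA_of_nA_le (hA : A.IsPositive) {S : H →L[ℂ] H} {C : ℝ}
    (hS : ∀ x, nA A (S x) ≤ C * nA A x) {x : H} (hx : nA A x = 1) : ‖ipA A (S x) x‖ ≤ wA A S :=
  le_csSup ⟨C, by
    rintro _ ⟨y, hy, rfl⟩
    simpa [hy] using (norm_ipA_le hA (S y) y).trans (by simpa [hy] using hS y)⟩ ⟨x, hx, rfl⟩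

theorem nA_add_apply_le (hA : A.IsPositive) {S T : H →L[ℂ] H} {C D : ℝ}
    (hS : ∀ x, nA A (S x) ≤ C * nA A x) (hT : ∀ x, nA A (T x) ≤ D * nA A x) (x : H) :
    nA A ((S + T) x) ≤ (C + D) * nA A x :=
  calc nA A (S x + T x) ≤ nA A (S x) + nA A (T x) := nA_add_le hA _ _
    _ ≤ C * nA A x + D * nA A x := add_le_add (hS x) (hT x)
    _ = (C + D) * nA A x := (add_mul _ _ _).symm

end PositiveOperator

section AAdjoint

variable {A T Ts : H →L[ℂ] H} {m : ℝ}

theorem norm_ipA_apply_le_of_norm_ipA_apply_self_le (hA : A.IsPositive)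
    (hT : ∀ x, ‖ipA A (T x) x‖ ≤ m * nA A x ^ 2) (y z : H) :
    ‖ipA A (T y) z‖ ≤ m * (nA A y ^ 2 + nA A z ^ 2) := by
  set I := Complex.I with hI
  have hpol : ipA A (T y) z = (ipA A (T (y + z)) (y + z) - ipA A (T (y - z)) (y - z)
      - I * ipA A (T (y + I • z)) (y + I • z) + I * ipA A (T (y - I • z)) (y - I • z)) / 4 :=
    inner_map_polarization' ((A ∘L T : H →L[ℂ] H) : H →ₗ[ℂ] H) y z
  have hnorm : ‖ipA A (T y) z‖ ≤ (‖ipA A (T (y + z)) (y + z)‖ + ‖ipA A (T (y - z)) (y - z)‖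
      + ‖ipA A (T (y + I • z)) (y + I • z)‖ + ‖ipA A (T (y - I • z)) (y - I • z)‖) / 4 := by
    rw [hpol, norm_div, RCLike.norm_ofNat]
    gcongr
    refine norm_add_le_of_le (norm_sub_le_of_le (norm_sub_le _ _) ?_) ?_ <;>
      simp only [hI, norm_mul, Complex.norm_I, one_mul, le_refl]
  have hIz : nA A (I • z) = nA A z := by rw [nA_smul hA, Complex.norm_I, one_mul]
  have h₁ := nA_add_sq_add_nA_sub_sq hA y z
  have h₂ := nA_add_sq_add_nA_sub_sq hA y (I • z)
  rw [hIz] at h₂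
  linarith [hT (y + z), hT (y - z), hT (y + I • z), hT (y - I • z), congrArg (m * ·) h₁,
    congrArg (m * ·) h₂]

theorem norm_ipA_apply_le_two_mul (hA : A.IsPositive)
    (hadj : ∀ x y : H, ipA A (T x) y = ipA A x (Ts y))
    (hT : ∀ x, ‖ipA A (T x) x‖ ≤ m * nA A x ^ 2) (y z : H) :
    ‖ipA A (T y) z‖ ≤ 2 * m * (nA A y * nA A z) := by
  rcases eq_or_ne (nA A y) 0 with hy | hy
  · simpa [hadj, hy] using norm_ipA_le hA y (Ts z)
  rcases eq_or_ne (nA A z) 0 with hz | hz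
  · simpa [hz] using norm_ipA_le hA (T y) z
  -- rescale `z` so that `‖y‖_A² + ‖z‖_A² = 2 ‖y‖_A ‖z‖_A` (equality case of AM–GM)
  set s := nA A y / nA A z
  have hs : 0 < s := div_pos ((nA_nonneg A y).lt_of_ne' hy) ((nA_nonneg A z).lt_of_ne' hz)
  have hsz : s * nA A z = nA A y := div_mul_cancel₀ _ hz
  have h := norm_ipA_apply_le_of_norm_ipA_apply_self_le hA hT y ((s : ℂ) • z)
  rw [ipA_smul_right, norm_mul, nA_smul hA, Complex.norm_real, Real.norm_of_nonneg hs.le,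
    hsz] at h
  refine le_of_mul_le_mul_left (h.trans_eq ?_) hs
  rw [← hsz]
  ring

theorem nA_apply_le (hA : A.IsPositive) (hadj : ∀ x y : H, ipA A (T x) y = ipA A x (Ts y))
    (hT : ∀ x, ‖ipA A (T x) x‖ ≤ m * nA A x ^ 2) (hm : 0 ≤ m) (y : H) :
    nA A (T y) ≤ 2 * m * nA A y := by
  have h := norm_ipA_apply_le_two_mul hA hadj hT y (T y)
  rw [norm_ipA_self hA] at h
  nlinarith [mul_nonneg hm (nA_nonneg A y), nA_nonneg A (T y)]

theorem nA_adjoint_apply_le (hA : A.IsPositive) (hadj : ∀ x y : H, ipA A (T x) y = ipA A x (Ts y))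
    (hT : ∀ x, ‖ipA A (T x) x‖ ≤ m * nA A x ^ 2) (hm : 0 ≤ m) (y : H) :
    nA A (Ts y) ≤ 2 * m * nA A y := by
  have h := norm_ipA_apply_le_two_mul hA hadj hT (Ts y) y
  rw [hadj, norm_ipA_self hA] at h
  nlinarith [mul_nonneg hm (nA_nonneg A y), nA_nonneg A (Ts y)]

variable {x : H}

theorem norm_ipA_apply_self_sq_le (hA : A.IsPositive)
    (hadj : ∀ x y : H, ipA A (T x) y = ipA A x (Ts y)) (hx : nA A x = 1) :
    ‖ipA A (T x) x‖ ^ 2 ≤ nA A (T x) * nA A (Ts x) := by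
  calc ‖ipA A (T x) x‖ ^ 2 = ‖ipA A (T x) x‖ * ‖ipA A x (Ts x)‖ := by rw [sq, hadj]
    _ ≤ (nA A (T x) * nA A x) * (nA A x * nA A (Ts x)) :=
        mul_le_mul (norm_ipA_le hA _ _) (norm_ipA_le hA _ _) (norm_nonneg _)
          (mul_nonneg (nA_nonneg A _) (nA_nonneg A _))
    _ = nA A (T x) * nA A (Ts x) := by rw [hx]; ring

theorem two_mul_nA_apply_mul_nA_adjoint_apply_le (hA : A.IsPositive)
    (hadj : ∀ x y : H, ipA A (T x) y = ipA A x (Ts y)) (hx : nA A x = 1) :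
    2 * (nA A (T x) * nA A (Ts x)) ≤ nA A ((Ts ∘L T + T ∘L Ts) x) := by
  have hS : ipA A x ((Ts ∘L T + T ∘L Ts) x) = ipA A (T x) (T x) + ipA A (Ts x) (Ts x) := by
    change ipA A x (Ts (T x) + T (Ts x)) = _
    rw [ipA, inner_add_right, ← ipA, ← ipA, ← hadj x (T x), ← ipA_conj_symm hA (T (Ts x)),
      hadj (Ts x) x, ipA_conj_symm hA]
  have hre : (ipA A x ((Ts ∘L T + T ∘L Ts) x)).re ≤ nA A ((Ts ∘L T + T ∘L Ts) x) :=
    (Complex.re_le_norm _).trans ((norm_ipA_le hA _ _).trans_eq (by rw [hx, one_mul]))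
  rw [hS, Complex.add_re, re_ipA_self hA, re_ipA_self hA] at hre
  nlinarith [sq_nonneg (nA A (T x) - nA A (Ts x))]

theorem two_mul_norm_ipA_apply_self_sq_le (hA : A.IsPositive)
    (hadj : ∀ x y : H, ipA A (T x) y = ipA A x (Ts y)) (hx : nA A x = 1) :
    2 * ‖ipA A (T x) x‖ ^ 2 ≤ nA A (T x) * nA A (Ts x) + ‖ipA A ((T ∘L T) x) x‖ := by
  have h := norm_ipA_mul_ipA_le hA hx (T x) (Ts x)
  rw [← hadj, ← hadj, norm_mul, ← sq] at h
  rw [ContinuousLinearMap.comp_apply]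
  linarith

end AAdjoint

theorem stmt9 (A : H →L[ℂ] H) (hA : A.IsPositive) (T Ts : H →L[ℂ] H)
    (hadj : ∀ x y : H, ipA A (T x) y = ipA A x (Ts y))
    (α β : ℝ) (hα : α ∈ Set.Icc (0 : ℝ) 1) (hβ : 0 ≤ β) :
    wA A T ^ 4 ≤
      (((2 * β + 1) * (1 + α ^ 2) + 2 * α) / (1 + β)) / 16 *
          opA A (Ts ∘L T + T ∘L Ts) ^ 2 +
        (((1 - α) * (2 + (1 + α) * (1 + 2 * β))) / (1 + β)) / 8 *
          (opA A (Ts ∘L T + T ∘L Ts) * wA A (T ∘L T)) := by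
  have hγ₁ := one_le_γ₁ hα.1 hβ
  have hγ₂ := γ₂_nonneg hα.1 hα.2 hβ
  have hP := opA_nonneg A (Ts ∘L T + T ∘L Ts)
  have hQ := wA_nonneg A (T ∘L T)
  have hK : 0 ≤ γ₁ α β / 16 * opA A (Ts ∘L T + T ∘L Ts) ^ 2 +
      γ₂ α β / 8 * (opA A (Ts ∘L T + T ∘L Ts) * wA A (T ∘L T)) := by positivity
  by_cases hT : BddAbove {c : ℝ | ∃ x : H, nA A x = 1 ∧ c = ‖ipA A (T x) x‖}
  swap
  · rw [wA, Real.sSup_of_not_bddAbove hT, zero_pow four_ne_zero]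
    exact hK
  have hw := wA_nonneg A T
  have hTw := norm_ipA_apply_self_le_wA hA hT
  have hTb := nA_apply_le hA hadj hTw hw
  have hTsb := nA_adjoint_apply_le hA hadj hTw hw
  refine wA_pow_le four_ne_zero hK fun x hx => ?_
  have hSx := nA_apply_le_opA (nA_add_apply_le hA (nA_comp_apply_le hTsb hTb (by positivity))
    (nA_comp_apply_le hTb hTsb (by positivity))) hx
  have hTTx := norm_ipA_apply_self_le_wA_of_nA_le hA (nA_comp_apply_le hTb hTb (by positivity)) hx
  have h₁ := norm_ipA_apply_self_sq_le hA hadj hx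
  have h₂ := two_mul_nA_apply_mul_nA_adjoint_apply_le hA hadj hx
  have h₃ := two_mul_norm_ipA_apply_self_sq_le hA hadj hx
  calc ‖ipA A (T x) x‖ ^ 4 = (‖ipA A (T x) x‖ ^ 2) ^ 2 := by ring
    _ ≤ γ₁ α β / 4 * (opA A (Ts ∘L T + T ∘L Ts) / 2) ^ 2 +
          γ₂ α β / 4 * (opA A (Ts ∘L T + T ∘L Ts) / 2 * wA A (T ∘L T)) :=
        sq_le_of_le_of_two_mul_le_add (by positivity) (by positivity) hQ (by linarith)
          (by linarith) hγ₁ hγ₂ (γ₁_add_γ₂ hβ)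
    _ = _ := by unfold γ₁ γ₂; ring
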